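/- arXiv:2405.02983 — 2 statements merged into one kernel-verified Lean document; each statement's English description precedes it below -/
import Mathlib

section
/- Theorem 1(i): Under the assumptions that each per-point information matrix x ↦ I(x, θ*) has entries continuous in x and the design space S is bounded (and the optimal approximate design ξ*_φ exists with finitely many support points, and the loss Φ(ξ) = φ(I⁻¹(ξ)) is continuous in the information matrix and positive), the optimal exact designs ξ*_{n,φ} satisfy lim_{n→∞} Eff_φ(ξ*_{n,φ}) = 1. -/
open Filter

/-- An approximate design: finitely many support points with nonnegative weights summing to 1. -/
structure Design (E : Type*) where
  m : ℕ
  pts : Fin m → E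
  w : Fin m → ℝ
  w_nonneg : ∀ i, 0 ≤ w i
  w_sum : ∑ i, w i = 1

/-- Information matrix `I(ξ, θ*) = Σ_i w_i I(v_i, θ*)` of an approximate design. -/
noncomputable def Design.info {E : Type*} {q : ℕ}
    (Info : E → Matrix (Fin q) (Fin q) ℝ) (d : Design E) : Matrix (Fin q) (Fin q) ℝ :=
  ∑ i, d.w i • Info (d.pts i)

/-- Information matrix `(1/n) Σ_j I(x_j, θ*)` of an exact design with `n` runs `x : Fin n → E`. -/
noncomputable def exactInfo {E : Type*} {q : ℕ}
    (Info : E → Matrix (Fin q) (Fin q) ℝ) {n : ℕ} (x : Fin n → E) :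
    Matrix (Fin q) (Fin q) ℝ :=
  ((n : ℝ)⁻¹) • ∑ j, Info (x j)

/-- Theorem 1(i): If the per-point information matrix `x ↦ I(x,θ*)` has entries
continuous in `x`, the design space `S ⊆ ℝ^p` is bounded, the optimal approximate design `ξ*_φ`
exists with finitely many support points (and positive weights), and the loss
`Φ(ξ) = φ(I⁻¹(ξ))` — viewed as a positive function of the information matrix, continuous at
the optimal information matrix — then the optimal exact designs `ξ*_{n,φ}` satisfy
`lim_{n→∞} Eff_φ(ξ*_{n,φ}) = 1`, where `Eff_φ(ξ) = Φ(ξ*_φ)/Φ(ξ)`. -/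
theorem stmt7
    {p q : ℕ} (S : Set (Fin p → ℝ)) (hSbdd : Bornology.IsBounded S)
    (Info : (Fin p → ℝ) → Matrix (Fin q) (Fin q) ℝ)
    (hInfoCont : ∀ a b, ContinuousOn (fun x => Info x a b) S)
    (φ : Matrix (Fin q) (Fin q) ℝ → ℝ)
    (hφpos : ∀ M, 0 < φ M)
    -- the optimal approximate design ξ*_φ on S, with positive weights
    (ξstar : Design (Fin p → ℝ))
    (hξstarS : ∀ i, ξstar.pts i ∈ S)
    (hξstarw : ∀ i, 0 < ξstar.w i)
    (hφcont : ContinuousAt φ (ξstar.info Info))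
    -- ξ*_φ is optimal among all approximate designs on S (hence among exact designs)
    (hoptA : ∀ d : Design (Fin p → ℝ), (∀ i, d.pts i ∈ S) →
      φ (ξstar.info Info) ≤ φ (d.info Info))
    (hoptE : ∀ (n : ℕ) (x : Fin n → (Fin p → ℝ)), (∀ j, x j ∈ S) →
      φ (ξstar.info Info) ≤ φ (exactInfo Info x))
    -- the optimal exact design with n runs, for each n
    (ξn : ∀ n : ℕ, Fin n → (Fin p → ℝ))
    (hξnS : ∀ (n : ℕ) (j : Fin n), ξn n j ∈ S)
    (hξnopt : ∀ (n : ℕ) (x : Fin n → (Fin p → ℝ)), (∀ j, x j ∈ S) →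
      φ (exactInfo Info (ξn n)) ≤ φ (exactInfo Info x)) :
    Tendsto (fun n : ℕ => φ (ξstar.info Info) / φ (exactInfo Info (ξn n)))
      atTop (nhds 1) := by
  classical
  set M : Matrix (Fin q) (Fin q) ℝ := ξstar.info Info with hMdef
  have hm : 0 < ξstar.m := by
    rcases Nat.eq_zero_or_pos ξstar.m with h | h
    · exfalso
      have h0 : (∑ i : Fin ξstar.m, ξstar.w i) = 0 := by
        have : IsEmpty (Fin ξstar.m) := by rw [h]; infer_instance
        simp
      rw [ξstar.w_sum] at h0; norm_num at h0
    · exact h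
  set i0 : Fin ξstar.m := ⟨0, hm⟩ with hi0
  -- counts
  set c : ℕ → Fin ξstar.m → ℕ := fun n i => ⌊(n : ℝ) * ξstar.w i⌋₊ with hcdef
  have hcle : ∀ (n : ℕ) i, (c n i : ℝ) ≤ (n : ℝ) * ξstar.w i := fun n i =>
    Nat.floor_le (mul_nonneg (Nat.cast_nonneg n) (ξstar.w_nonneg i))
  have hclt : ∀ (n : ℕ) i, (n : ℝ) * ξstar.w i - 1 < (c n i : ℝ) := fun n i =>
    Nat.sub_one_lt_floor _
  have hsum_le : ∀ n : ℕ, ∑ i, c n i ≤ n := by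
    intro n
    have h1 : ((∑ i, c n i : ℕ) : ℝ) ≤ (n : ℝ) := by
      push_cast
      calc ∑ i, (c n i : ℝ) ≤ ∑ i, (n : ℝ) * ξstar.w i :=
            Finset.sum_le_sum (fun i _ => hcle n i)
        _ = (n : ℝ) := by rw [← Finset.mul_sum, ξstar.w_sum, mul_one]
    exact_mod_cast h1
  set r : ℕ → ℕ := fun n => n - ∑ i, c n i with hrdef
  have hr_cast : ∀ n : ℕ, (r n : ℝ) = (n : ℝ) - ∑ i, (c n i : ℝ) := by
    intro n
    rw [hrdef]
    push_cast [Nat.cast_sub (hsum_le n)]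
    ring
  have hr_le : ∀ n : ℕ, (r n : ℝ) ≤ (ξstar.m : ℝ) := by
    intro n
    have h1 : (n : ℝ) - (ξstar.m : ℝ) ≤ ∑ i, (c n i : ℝ) := by
      calc (n : ℝ) - (ξstar.m : ℝ) = ∑ i : Fin ξstar.m, ((n : ℝ) * ξstar.w i - 1) := by
            rw [Finset.sum_sub_distrib, ← Finset.mul_sum, ξstar.w_sum, mul_one]
            simp
        _ ≤ ∑ i, (c n i : ℝ) := Finset.sum_le_sum (fun i _ => (hclt n i).le)
    rw [hr_cast n]; linarith
  set d : ℕ → Fin ξstar.m → ℕ := fun n i => c n i + if i = i0 then r n else 0 with hddef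
  have hd_sum : ∀ n : ℕ, ∑ i, d n i = n := by
    intro n
    rw [hddef]
    simp only [Finset.sum_add_distrib, Finset.sum_ite_eq' Finset.univ i0,
      Finset.mem_univ, if_true]
    have h1 := hsum_le n
    have h2 : r n = n - ∑ i, c n i := by rw [hrdef]
    omega
  have hd_lower : ∀ (n : ℕ) i, (n : ℝ) * ξstar.w i - 1 < (d n i : ℝ) := by
    intro n i
    have h1 : c n i ≤ d n i := by rw [hddef]; exact Nat.le_add_right _ _
    have h2 : (c n i : ℝ) ≤ (d n i : ℝ) := by exact_mod_cast h1
    linarith [hclt n i]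
  have hd_upper : ∀ (n : ℕ) i, (d n i : ℝ) ≤ (n : ℝ) * ξstar.w i + (ξstar.m : ℝ) := by
    intro n i
    have h1 : d n i ≤ c n i + r n := by
      rw [hddef]; dsimp only; split <;> omega
    have h2 : (d n i : ℝ) ≤ (c n i : ℝ) + (r n : ℝ) := by exact_mod_cast h1
    linarith [hcle n i, hr_le n]
  -- the ratios d n i / n tend to the weights
  have hrat : ∀ i, Tendsto (fun n : ℕ => (d n i : ℝ) / (n : ℝ)) atTop (nhds (ξstar.w i)) := by
    intro i
    have hlow : Tendsto (fun n : ℕ => ξstar.w i - 1 / (n : ℝ)) atTop (nhds (ξstar.w i)) := by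
      have := (tendsto_const_nhds (x := ξstar.w i) (f := atTop (α := ℕ))).sub
        tendsto_one_div_atTop_nhds_zero_nat
      simpa using this
    have hup : Tendsto (fun n : ℕ => ξstar.w i + (ξstar.m : ℝ) / (n : ℝ)) atTop
        (nhds (ξstar.w i)) := by
      have h2 : Tendsto (fun n : ℕ => (ξstar.m : ℝ) * (1 / (n : ℝ))) atTop (nhds 0) := by
        simpa using tendsto_one_div_atTop_nhds_zero_nat.const_mul (ξstar.m : ℝ)
      have := (tendsto_const_nhds (x := ξstar.w i) (f := atTop (α := ℕ))).add h2
      simp only [add_zero] at this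
      refine this.congr (fun n => ?_)
      rw [mul_one_div]
    apply tendsto_of_tendsto_of_tendsto_of_le_of_le' hlow hup
    · filter_upwards [eventually_ge_atTop 1] with n hn
      have hn0 : (0 : ℝ) < (n : ℝ) := by exact_mod_cast Nat.lt_of_lt_of_le Nat.zero_lt_one hn
      have h1 : ξstar.w i - 1 / (n : ℝ) = ((n : ℝ) * ξstar.w i - 1) / (n : ℝ) := by
        field_simp
      rw [h1]
      gcongr
      exact (hd_lower n i).le
    · filter_upwards [eventually_ge_atTop 1] with n hn
      have hn0 : (0 : ℝ) < (n : ℝ) := by exact_mod_cast Nat.lt_of_lt_of_le Nat.zero_lt_one hn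
      have h1 : ξstar.w i + (ξstar.m : ℝ) / (n : ℝ)
          = ((n : ℝ) * ξstar.w i + (ξstar.m : ℝ)) / (n : ℝ) := by
        field_simp
      rw [h1]
      gcongr
      exact hd_upper n i
  -- the approximating exact designs
  have hcard : ∀ n : ℕ, Fintype.card (Σ i : Fin ξstar.m, Fin (d n i)) = n := by
    intro n
    simp [Fintype.card_sigma, hd_sum n]
  let e : ∀ n : ℕ, (Σ i : Fin ξstar.m, Fin (d n i)) ≃ Fin n := fun n =>
    Fintype.equivFinOfCardEq (hcard n)
  let X : ∀ n : ℕ, Fin n → (Fin p → ℝ) := fun n j => ξstar.pts ((e n).symm j).1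
  have hXS : ∀ (n : ℕ) (j : Fin n), X n j ∈ S := fun n j => hξstarS _
  have hXinfo : ∀ n : ℕ,
      exactInfo Info (X n) = ∑ i, ((d n i : ℝ) / (n : ℝ)) • Info (ξstar.pts i) := by
    intro n
    have h1 : ∑ j : Fin n, Info (X n j) = ∑ i, (d n i) • Info (ξstar.pts i) := by
      rw [← Fintype.sum_equiv (e n) (fun s => Info (ξstar.pts s.1))
        (fun j => Info (X n j)) (by intro s; simp [X])]
      rw [← Finset.univ_sigma_univ, Finset.sum_sigma]
      simp [Finset.sum_const]
    rw [exactInfo, h1, Finset.smul_sum]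
    refine Finset.sum_congr rfl (fun i _ => ?_)
    rw [← Nat.cast_smul_eq_nsmul ℝ, smul_smul, div_eq_inv_mul]
  have hXtend : Tendsto (fun n : ℕ => exactInfo Info (X n)) atTop (nhds M) := by
    have h1 : Tendsto (fun n : ℕ => ∑ i, ((d n i : ℝ) / (n : ℝ)) • Info (ξstar.pts i))
        atTop (nhds (∑ i, ξstar.w i • Info (ξstar.pts i))) :=
      tendsto_finset_sum _ (fun i _ => (hrat i).smul_const _)
    have h2 : M = ∑ i, ξstar.w i • Info (ξstar.pts i) := by rw [hMdef, Design.info]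
    rw [h2]
    exact h1.congr (fun n => (hXinfo n).symm)
  have hφX : Tendsto (fun n : ℕ => φ (exactInfo Info (X n))) atTop (nhds (φ M)) :=
    hφcont.tendsto.comp hXtend
  have hF : Tendsto (fun n : ℕ => φ (exactInfo Info (ξn n))) atTop (nhds (φ M)) :=
    tendsto_of_tendsto_of_tendsto_of_le_of_le tendsto_const_nhds hφX
      (fun n => hoptE n (ξn n) (hξnS n)) (fun n => hξnopt n (X n) (hXS n))
  have hne : φ M ≠ 0 := (hφpos M).ne'
  have hfin := (tendsto_const_nhds : Tendsto (fun _ : ℕ => φ M) atTop (nhds (φ M))).div hF hne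
  rw [div_self hne] at hfin
  exact hfin
end

section
/- Theorem 1(ii): Suppose S_N is a grid in the bounded design space S such that for every point x ∈ S there exist grid points u_N ∈ S_N with u_N → x as N → ∞, and x ↦ I(x, θ*) is entrywise continuous. Then the optimal approximate designs ξ*_{φ,N} on S_N satisfy lim_{N→∞} Eff_φ(ξ*_{φ,N}) = 1. -/
open Filter Topology

theorem Matrix.continuousOn_of_entrywise {X m n R : Type*} [TopologicalSpace X]
    [TopologicalSpace R] {f : X → Matrix m n R} {s : Set X}
    (h : ∀ a b, ContinuousOn (fun x => f x a b) s) : ContinuousOn f s :=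
  continuousOn_pi.2 fun a => continuousOn_pi.2 (h a)

namespace Design

variable {X : Type*} {q : ℕ}

def withPts (d : Design X) (v : Fin d.m → X) : Design X :=
  ⟨d.m, v, d.w, d.w_nonneg, d.w_sum⟩

theorem tendsto_info_withPts {ι : Type*} {l : Filter ι}
    (Info : X → Matrix (Fin q) (Fin q) ℝ) (d : Design X) (v : ι → Fin d.m → X)
    (hv : ∀ i, Tendsto (fun n => Info (v n i)) l (𝓝 (Info (d.pts i)))) :
    Tendsto (fun n => (d.withPts (v n)).info Info) l (𝓝 (d.info Info)) := by
  show Tendsto (fun n => ∑ i, d.w i • Info (v n i)) l _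
  exact tendsto_finsetSum _ fun i _ => (hv i).const_smul (d.w i)

/-- Moving each support point of `d` along a sequence of grid points converging to it gives
grid designs whose information matrices converge to that of `d`. -/
theorem exists_grid_designs_tendsto_info [TopologicalSpace X] {ι : Type*} {l : Filter ι}
    {S : Set X} {SN : ι → Set X} (hSNsub : ∀ N, SN N ⊆ S)
    (hgrid : ∀ x ∈ S, ∃ u : ι → X, (∀ N, u N ∈ SN N) ∧ Tendsto u l (𝓝 x))
    {Info : X → Matrix (Fin q) (Fin q) ℝ} (hInfo : ContinuousOn Info S)
    (d : Design X) (hd : ∀ i, d.pts i ∈ S) :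
    ∃ e : ι → Design X, (∀ N i, (e N).pts i ∈ SN N) ∧
      Tendsto (fun N => (e N).info Info) l (𝓝 (d.info Info)) := by
  choose u hu hulim using fun i => hgrid (d.pts i) (hd i)
  refine ⟨fun N => d.withPts fun i => u i N, fun N i => hu i N,
    tendsto_info_withPts Info d _ fun i => ?_⟩
  exact (hInfo _ (hd i)).tendsto.comp <| tendsto_nhdsWithin_iff.2
    ⟨hulim i, Eventually.of_forall fun N => hSNsub N (hu i N)⟩

end Design

theorem stmt8_general
    {p q : ℕ} (S : Set (Fin p → ℝ))
    (SN : ℕ → Set (Fin p → ℝ)) (hSNsub : ∀ N, SN N ⊆ S)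
    (hgrid : ∀ x ∈ S, ∃ u : ℕ → (Fin p → ℝ),
      (∀ N, u N ∈ SN N) ∧ Tendsto u atTop (nhds x))
    (Info : (Fin p → ℝ) → Matrix (Fin q) (Fin q) ℝ)
    (hInfoCont : ∀ a b, ContinuousOn (fun x => Info x a b) S)
    (φ : Matrix (Fin q) (Fin q) ℝ → ℝ)
    (hφpos : ∀ M, 0 < φ M)
    -- the optimal approximate design ξ*_φ on S
    (ξstar : Design (Fin p → ℝ))
    (hξstarS : ∀ i, ξstar.pts i ∈ S)
    (hφcont : ContinuousAt φ (ξstar.info Info))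
    (hoptS : ∀ d : Design (Fin p → ℝ), (∀ i, d.pts i ∈ S) →
      φ (ξstar.info Info) ≤ φ (d.info Info))
    -- the optimal approximate design on the grid S_N, for each N
    (ξN : ℕ → Design (Fin p → ℝ))
    (hξNmem : ∀ N i, (ξN N).pts i ∈ SN N)
    (hξNopt : ∀ (N : ℕ) (d : Design (Fin p → ℝ)), (∀ i, d.pts i ∈ SN N) →
      φ ((ξN N).info Info) ≤ φ (d.info Info)) :
    Tendsto (fun N : ℕ => φ (ξstar.info Info) / φ ((ξN N).info Info))
      atTop (nhds 1) := by
  obtain ⟨e, heSN, he⟩ := Design.exists_grid_designs_tendsto_info hSNsub hgrid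
    (Matrix.continuousOn_of_entrywise hInfoCont) ξstar hξstarS
  -- `Φ(ξ*) ≤ Φ(ξ*_N) ≤ Φ(e N) → Φ(ξ*)`
  have hval : Tendsto (fun N => φ ((ξN N).info Info)) atTop (𝓝 (φ (ξstar.info Info))) :=
    tendsto_of_tendsto_of_tendsto_of_le_of_le tendsto_const_nhds (hφcont.tendsto.comp he)
      (fun N => hoptS _ fun i => hSNsub N (hξNmem N i)) (fun N => hξNopt N _ (heSN N))
  exact (tendsto_div_nhds_one_iff_eq₀ tendsto_const_nhds hval (hφpos _).ne').2 rfl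

/-- Theorem 1(ii): Suppose `S_N` is a grid in the bounded design space `S` such
that every point `x ∈ S` is a limit of grid points `u_N ∈ S_N` as `N → ∞`, and `x ↦ I(x,θ*)`
is entrywise continuous. Then the optimal approximate designs `ξ*_{φ,N}` on `S_N` satisfy
`lim_{N→∞} Eff_φ(ξ*_{φ,N}) = 1`, where `Eff_φ(ξ) = Φ(ξ*_φ)/Φ(ξ)` with `Φ(ξ) = φ(I(ξ))`
continuous in the information matrix and positive-valued. -/
theorem stmt8
    {p q : ℕ} (S : Set (Fin p → ℝ)) (hSbdd : Bornology.IsBounded S)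
    (SN : ℕ → Set (Fin p → ℝ)) (hSNsub : ∀ N, SN N ⊆ S)
    (hgrid : ∀ x ∈ S, ∃ u : ℕ → (Fin p → ℝ),
      (∀ N, u N ∈ SN N) ∧ Tendsto u atTop (nhds x))
    (Info : (Fin p → ℝ) → Matrix (Fin q) (Fin q) ℝ)
    (hInfoCont : ∀ a b, ContinuousOn (fun x => Info x a b) S)
    (φ : Matrix (Fin q) (Fin q) ℝ → ℝ)
    (hφpos : ∀ M, 0 < φ M)
    -- the optimal approximate design ξ*_φ on S
    (ξstar : Design (Fin p → ℝ))
    (hξstarS : ∀ i, ξstar.pts i ∈ S)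
    (hφcont : ContinuousAt φ (ξstar.info Info))
    (hoptS : ∀ d : Design (Fin p → ℝ), (∀ i, d.pts i ∈ S) →
      φ (ξstar.info Info) ≤ φ (d.info Info))
    -- the optimal approximate design on the grid S_N, for each N
    (ξN : ℕ → Design (Fin p → ℝ))
    (hξNmem : ∀ N i, (ξN N).pts i ∈ SN N)
    (hξNopt : ∀ (N : ℕ) (d : Design (Fin p → ℝ)), (∀ i, d.pts i ∈ SN N) →
      φ ((ξN N).info Info) ≤ φ (d.info Info)) :
    Tendsto (fun N : ℕ => φ (ξstar.info Info) / φ ((ξN N).info Info))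
      atTop (nhds 1) :=
  stmt8_general S SN hSNsub hgrid Info hInfoCont φ hφpos ξstar hξstarS hφcont hoptS ξN hξNmem hξNopt
end
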